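/- arXiv:2108.03023 — 5 statements merged into one kernel-verified Lean document; each statement's English description precedes it below -/
import Mathlib

section
/- Let p0, p1, f, g, r be real numbers with 0 < p1 < p0, f > 0, g > 0 and r ≥ 0. Then g * r^(p1) ≤ f * r^(p0) + ((p1/p0)^(p1/(p0 - p1)) - (p1/p0)^(p0/(p0 - p1))) * (g^(p0) / f^(p1))^(1/(p0 - p1)). -/
/-!
Write `θ = p1 / p0`. Weighted AM–GM applied to `(r / K) ^ p0` with weights `θ, 1 - θ` gives,
for every scale `K > 0`, `r ^ p1 ≤ θ K ^ (p1 - p0) r ^ p0 + (1 - θ) K ^ p1`. Multiplying by `g`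
and choosing `K ^ (p0 - p1) = θ g / f` makes the coefficient of `r ^ p0` exactly `f`, and the
remaining term `(1 - θ) g K ^ p1` is the stated constant.
-/

open Real

theorem rpow_le_mul_rpow_add_mul_rpow {p q r K : ℝ} (hq : 0 ≤ q) (hqp : q ≤ p) (hr : 0 ≤ r)
    (hK : 0 < K) :
    r ^ q ≤ q / p * K ^ (q - p) * r ^ p + (1 - q / p) * K ^ q := by
  rcases hq.eq_or_lt with rfl | hq
  · simp
  have hp : 0 < p := hq.trans_le hqp
  have hrK : 0 ≤ r / K := div_nonneg hr hK.le
  have amgm := geom_mean_le_arith_mean2_weighted (div_nonneg hq.le hp.le)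
    (sub_nonneg.2 ((div_le_one hp).2 hqp)) (rpow_nonneg hrK p) zero_le_one (by ring)
  rw [one_rpow, mul_one, mul_one, ← rpow_mul hrK, mul_div_cancel₀ _ hp.ne',
    div_rpow hr hK.le, div_rpow hr hK.le] at amgm
  have hKq : 0 < K ^ q := rpow_pos_of_pos hK q
  calc r ^ q = K ^ q * (r ^ q / K ^ q) := by field_simp
    _ ≤ K ^ q * (q / p * (r ^ p / K ^ p) + (1 - q / p)) := by gcongr
    _ = q / p * (K ^ q / K ^ p) * r ^ p + (1 - q / p) * K ^ q := by ring
    _ = _ := by rw [← rpow_sub hK]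

theorem mul_mul_rpow_one_div_sub_rpow_sub {p q θ f g : ℝ} (hpq : p ≠ q) (hθ : 0 < θ)
    (hf : 0 < f) (hg : 0 < g) :
    g * (θ * ((θ * g / f) ^ (1 / (p - q))) ^ (q - p)) = f := by
  have hd : p - q ≠ 0 := sub_ne_zero.2 hpq
  rw [← rpow_mul (by positivity), show 1 / (p - q) * (q - p) = -1 by field_simp; ring,
    rpow_neg_one]
  field_simp

theorem mul_one_sub_mul_rpow_one_div_sub_rpow {p q θ f g : ℝ} (hpq : p ≠ q) (hθ : 0 < θ)
    (hf : 0 < f) (hg : 0 < g) :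
    g * ((1 - θ) * ((θ * g / f) ^ (1 / (p - q))) ^ q) =
      (θ ^ (q / (p - q)) - θ ^ (p / (p - q))) * (g ^ p / f ^ q) ^ (1 / (p - q)) := by
  have hd : p - q ≠ 0 := sub_ne_zero.2 hpq
  have hexp : p / (p - q) = q / (p - q) + 1 := by field_simp; ring
  rw [← rpow_mul (by positivity), div_rpow (by positivity) hf.le, mul_rpow hθ.le hg.le,
    div_rpow (by positivity) (by positivity), ← rpow_mul hg.le, ← rpow_mul hf.le,
    one_div_mul_eq_div, mul_one_div, mul_one_div, hexp, rpow_add hθ, rpow_add hg, rpow_one,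
    rpow_one]
  have hfq : 0 < f ^ (q / (p - q)) := by positivity
  field_simp

/-- Weighted Young-type inequality (2.2): for `0 < p1 < p0`, `f, g > 0`, `r ≥ 0`,
`g * r^(p1) ≤ f * r^(p0) + ((p1/p0)^(p1/(p0-p1)) - (p1/p0)^(p0/(p0-p1))) * (g^(p0)/f^(p1))^(1/(p0-p1))`. -/
theorem stmt0 (p0 p1 f g r : ℝ) (hp1 : 0 < p1) (hp : p1 < p0)
    (hf : 0 < f) (hg : 0 < g) (hr : 0 ≤ r) :
    g * r ^ p1 ≤ f * r ^ p0 +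
      ((p1 / p0) ^ (p1 / (p0 - p1)) - (p1 / p0) ^ (p0 / (p0 - p1))) *
        (g ^ p0 / f ^ p1) ^ (1 / (p0 - p1)) := by
  set θ := p1 / p0
  have hθ : 0 < θ := div_pos hp1 (hp1.trans hp)
  set K := (θ * g / f) ^ (1 / (p0 - p1))
  have hK : 0 < K := by positivity
  calc g * r ^ p1 ≤ g * (θ * K ^ (p1 - p0) * r ^ p0 + (1 - θ) * K ^ p1) :=
        mul_le_mul_of_nonneg_left (rpow_le_mul_rpow_add_mul_rpow hp1.le hp.le hr hK) hg.le
    _ = g * (θ * K ^ (p1 - p0)) * r ^ p0 + g * ((1 - θ) * K ^ p1) := by ring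
    _ = _ := by
      rw [mul_mul_rpow_one_div_sub_rpow_sub hp.ne' hθ hf hg,
        mul_one_sub_mul_rpow_one_div_sub_rpow hp.ne' hθ hf hg]
end

section
/- Let a, G > 0 and t1 < T be reals (T a real number), p : ℝ → ℝ continuous, and P : ℝ → ℝ with: P has derivative p(t) at every t ∈ ℝ. Suppose z : ℝ → ℝ satisfies z(t) > 0 for all t ∈ [t1, T), z has at every t ∈ [t1, T) a derivative z'(t) with z'(t) ≤ a * p(t) * z(t) - G * p(t), and z(t1) < G/a. Then for every t ∈ [t1, T), P(t) < P(t1) - (1/a) * log(1 - a * z(t1) / G). -/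
/-!
With `w = a z - G`, the differential inequality reads `w' ≤ a p w`, so the integrating factor
`exp (-a P)` makes `(a z - G) exp (-a P)` nonincreasing. Since `z > 0`, this quantity is
`> -G exp (-a P)` at time `t`, which compares `exp (-a P t)` with its value at `t1` and, after
taking logarithms, bounds `P t`.
-/

open Real Set

theorem antitoneOn_mul_exp_neg_of_hasDerivAt_le {s : Set ℝ} (hs : Convex ℝ s)
    {q Q w w' : ℝ → ℝ} (hQ : ∀ t ∈ s, HasDerivAt Q (q t) t)
    (hw : ∀ t ∈ s, HasDerivAt w (w' t) t) (hle : ∀ t ∈ s, w' t ≤ q t * w t) :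
    AntitoneOn (fun t => w t * exp (-Q t)) s := by
  have hderiv : ∀ t ∈ s, HasDerivAt (fun t => w t * exp (-Q t))
      ((w' t - q t * w t) * exp (-Q t)) t := fun t ht =>
    ((hw t ht).mul (hQ t ht).neg.exp).congr_deriv (by rw [Pi.neg_apply]; ring)
  refine antitoneOn_of_hasDerivWithinAt_nonpos hs
    (fun t ht => (hderiv t ht).continuousAt.continuousWithinAt)
    (fun t ht => (hderiv t (interior_subset ht)).hasDerivWithinAt) fun t ht => ?_
  exact mul_nonpos_of_nonpos_of_nonneg (sub_nonpos.2 (hle t (interior_subset ht)))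
    (exp_pos _).le

theorem lt_sub_log_div_of_mul_exp_lt {a c G x y : ℝ} (ha : 0 < a) (hc : 0 < c) (hG : 0 < G)
    (h : c * exp (-(a * x)) < G * exp (-(a * y))) :
    y < x - 1 / a * log (c / G) := by
  have hlog := log_lt_log (by positivity) h
  rw [log_mul hc.ne' (exp_pos _).ne', log_mul hG.ne' (exp_pos _).ne', log_exp, log_exp] at hlog
  rw [log_div hc.ne' hG.ne', ← mul_lt_mul_iff_right₀ ha, mul_sub, ← mul_assoc,
    mul_one_div_cancel ha.ne', one_mul]
  linarith

theorem stmt10_general (a G t1 T : ℝ) (ha : 0 < a) (hG : 0 < G)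
    (p P : ℝ → ℝ) (hP : ∀ t : ℝ, HasDerivAt P (p t) t)
    (z z' : ℝ → ℝ)
    (hpos : ∀ t ∈ Set.Ico t1 T, 0 < z t)
    (hz : ∀ t ∈ Set.Ico t1 T, HasDerivAt z (z' t) t)
    (hineq : ∀ t ∈ Set.Ico t1 T, z' t ≤ a * p t * z t - G * p t)
    (hinit : z t1 < G / a) :
    ∀ t ∈ Set.Ico t1 T, P t < P t1 - (1 / a) * Real.log (1 - a * z t1 / G) := by
  rintro t ⟨ht1, htT⟩
  have hanti : AntitoneOn (fun s => (a * z s - G) * exp (-(a * P s))) (Ico t1 T) :=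
    antitoneOn_mul_exp_neg_of_hasDerivAt_le (convex_Ico t1 T) (fun s _ => (hP s).const_mul a)
      (fun s hs => ((hz s hs).const_mul a).sub_const G)
      (fun s hs => by linarith [mul_le_mul_of_nonneg_left (hineq s hs) ha.le])
  have hdecay := hanti ⟨le_rfl, ht1.trans_lt htT⟩ ⟨ht1, htT⟩ ht1
  have hc : 0 < G - a * z t1 := by rw [lt_div_iff₀ ha] at hinit; linarith
  rw [one_sub_div hG.ne']
  refine lt_sub_log_div_of_mul_exp_lt ha hc hG ?_
  calc (G - a * z t1) * exp (-(a * P t1))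
      ≤ (G - a * z t) * exp (-(a * P t)) := by linarith
    _ < G * exp (-(a * P t)) := by
      gcongr
      linarith [mul_pos ha (hpos t ⟨ht1, htT⟩)]

/-- Finite-time blow-up bound of Section 3: if `z > 0` on `[t1, T)` satisfies
`z' ≤ a·p(t)·z - G·p(t)` and `z(t1) < G/a`, then
`P(t) < P(t1) - (1/a)·log(1 - a·z(t1)/G)` for all `t ∈ [t1, T)`. -/
theorem stmt10 (a G t1 T : ℝ) (ha : 0 < a) (hG : 0 < G) (hT : t1 < T)
    (p P : ℝ → ℝ) (hp : Continuous p) (hP : ∀ t : ℝ, HasDerivAt P (p t) t)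
    (z z' : ℝ → ℝ)
    (hpos : ∀ t ∈ Set.Ico t1 T, 0 < z t)
    (hz : ∀ t ∈ Set.Ico t1 T, HasDerivAt z (z' t) t)
    (hineq : ∀ t ∈ Set.Ico t1 T, z' t ≤ a * p t * z t - G * p t)
    (hinit : z t1 < G / a) :
    ∀ t ∈ Set.Ico t1 T, P t < P t1 - (1 / a) * Real.log (1 - a * z t1 / G) :=
  stmt10_general a G t1 T ha hG p P hP z z' hpos hz hineq hinit
end

section
/- Let a, G, q > 0 and t1 be real numbers, and let T be a real number with t1 < T. Suppose y : ℝ → ℝ satisfies y(t) > 0 for all t ∈ [t1, T), and y has at every t ∈ [t1, T) a derivative y'(t) with y'(t) ≥ -2*a*y(t) + 2*G*(y(t))^(q+1), and suppose G * (y(t1))^q > a. Then T ≤ t1 - (1/(2*a*q)) * log(1 - a/(G * (y(t1))^q)). -/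
/-!
For `z = y ^ (-q)` the Bernoulli inequality `y' ≥ -2a y + 2G y^(q+1)` linearises to
`z' ≤ 2aq (z - G/a)`. By Grönwall, `z t - G/a ≤ (z t₁ - G/a) e^{2aq (t - t₁)}`, where
`z t₁ - G/a < 0` because `G y(t₁)^q > a`. Since `z > 0`, the left side stays above `-G/a`,
which bounds `e^{2aq (t - t₁)}` and hence `t`.
-/

open Real Set

theorem le_mul_exp_of_hasDerivAt_le_mul {f f' : ℝ → ℝ} {K a b : ℝ}
    (hf : ∀ x ∈ Ico a b, HasDerivAt f (f' x) x) (bound : ∀ x ∈ Ico a b, f' x ≤ K * f x) :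
    ∀ x ∈ Ico a b, f x ≤ f a * exp (K * (x - a)) := by
  intro x hx
  have hsub : Icc a x ⊆ Ico a b := Icc_subset_Ico_right hx.2
  have hsub' : Ico a x ⊆ Ico a b := Ico_subset_Icc_self.trans hsub
  have := le_gronwallBound_of_liminf_deriv_right_le (f' := f') (δ := f a) (K := K) (ε := 0)
    (fun y hy => (hf y (hsub hy)).continuousAt.continuousWithinAt)
    (fun y hy _ hr => (hf y (hsub' hy)).hasDerivWithinAt.liminf_right_slope_le hr) le_rfl
    (fun y hy => by simpa using bound y (hsub' hy)) x (right_mem_Icc.2 hx.1)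
  rwa [gronwallBound_ε0] at this

theorem rpow_neg_deriv_le_of_bernoulli {α β q y y' : ℝ} (hq : 0 ≤ q) (hy : 0 < y)
    (h : -α * y + β * y ^ (q + 1) ≤ y') :
    y' * (-q) * y ^ (-q - 1) ≤ q * α * y ^ (-q) - q * β := by
  have h1 : y * y ^ (-q - 1) = y ^ (-q) := by
    rw [rpow_sub_one hy.ne', mul_div_cancel₀ _ hy.ne']
  have h2 : y ^ (q + 1) * y ^ (-q - 1) = 1 := by
    rw [← rpow_add hy]; simp
  have hw : 0 ≤ q * y ^ (-q - 1) := by positivity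
  linear_combination mul_le_mul_of_nonneg_right h hw + (q * α) * h1 - (q * β) * h2

theorem le_of_forall_mem_Ico_lt {a b B : ℝ} (hab : a < b) (h : ∀ t ∈ Ico a b, t < B) :
    b ≤ B := by
  by_contra! hB
  exact (h (max a B) ⟨le_max_left a B, max_lt hab hB⟩).not_ge (le_max_right a B)

theorem lt_sub_one_div_mul_log_of_mul_exp_lt_one {c k s t : ℝ} (hc : 0 < c) (hk : 0 < k)
    (h : c * exp (k * (t - s)) < 1) : t < s - 1 / k * log c := by
  have hlog := log_lt_log (by positivity) h
  rw [log_mul hc.ne' (exp_pos _).ne', log_exp, log_one] at hlog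
  rw [one_div_mul_eq_div, lt_sub_comm, div_lt_iff₀ hk]
  linarith

/-- Quantitative finite-time blow-up (Section 3): a positive solution of
`y' ≥ -2a·y + 2G·y^(q+1)` on `[t1, T)` with `G·y(t1)^q > a` cannot exist beyond
`t1 - (1/(2aq))·log(1 - a/(G·y(t1)^q))`. -/
theorem stmt11 (a G q t1 T : ℝ) (ha : 0 < a) (hG : 0 < G) (hq : 0 < q) (hT : t1 < T)
    (y y' : ℝ → ℝ)
    (hpos : ∀ t ∈ Set.Ico t1 T, 0 < y t)
    (hy : ∀ t ∈ Set.Ico t1 T, HasDerivAt y (y' t) t)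
    (hineq : ∀ t ∈ Set.Ico t1 T, -2 * a * y t + 2 * G * y t ^ (q + 1) ≤ y' t)
    (hinit : a < G * y t1 ^ q) :
    T ≤ t1 - (1 / (2 * a * q)) * Real.log (1 - a / (G * y t1 ^ q)) := by
  set w : ℝ → ℝ := fun t => y t ^ (-q) - G / a
  have hw : ∀ t ∈ Ico t1 T, HasDerivAt w (y' t * (-q) * y t ^ (-q - 1)) t := fun t ht =>
    ((hy t ht).rpow_const (Or.inl (hpos t ht).ne')).sub_const _
  have hw' : ∀ t ∈ Ico t1 T, y' t * (-q) * y t ^ (-q - 1) ≤ 2 * a * q * w t := fun t ht =>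
    calc _ ≤ q * (2 * a) * y t ^ (-q) - q * (2 * G) :=
          rpow_neg_deriv_le_of_bernoulli hq.le (hpos t ht) (by linarith [hineq t ht])
      _ = 2 * a * q * w t := by simp only [w]; field_simp
  have ht1 : t1 ∈ Ico t1 T := ⟨le_rfl, hT⟩
  have hY : 0 < y t1 ^ q := rpow_pos_of_pos (hpos t1 ht1) q
  set c := 1 - a / (G * y t1 ^ q)
  have hc : 0 < c := sub_pos.2 ((div_lt_one (by positivity)).2 hinit)
  have hwt1 : w t1 = -(G / a) * c := by
    simp only [w, c, rpow_neg (hpos t1 ht1).le]; field_simp; ring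
  refine le_of_forall_mem_Ico_lt hT fun t ht => lt_sub_one_div_mul_log_of_mul_exp_lt_one hc
    (by positivity) ?_
  have hgron := le_mul_exp_of_hasDerivAt_le_mul hw hw' t ht
  rw [hwt1] at hgron
  have hz : 0 < y t ^ (-q) := rpow_pos_of_pos (hpos t ht) (-q)
  have : G / a * (c * exp (2 * a * q * (t - t1))) < G / a * 1 := by
    simp only [w] at hgron; linarith
  exact lt_of_mul_lt_mul_left this (by positivity)
end

section
/- Let α ∈ ℝ, g > 0, T > 0 be reals and let p : ℝ → ℝ be continuous. Suppose y : ℝ → ℝ satisfies y(t) > 0 for all t ∈ [0, T], and y has at every t ∈ [0, T] a derivative y'(t) with y'(t) ≤ -2*α*y(t) + 2*g*(y(t))^(1 + p(t)/2). Then for every t ∈ [0, T], y(t) ≤ y(0) * exp(-2*α*t + 2*g*∫_0^t (y(s))^(p(s)/2) ds). -/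
/-!
Dividing the differential inequality by `y > 0` turns it into the linear inequality
`y' ≤ β y` with the continuous coefficient `β(t) = -2α + 2g·y(t)^(p(t)/2)`. For such an
inequality `log y - ∫ β` has nonpositive derivative, hence `y(t) ≤ y(0)·exp ∫_0^t β`.
-/

open Set Real intervalIntegral

section Primitive

variable {β : ℝ → ℝ} {a b : ℝ}

theorem ContinuousOn.continuousOn_primitive_Icc_of_le (hβ : ContinuousOn β (Icc a b))
    (hab : a ≤ b) : ContinuousOn (fun t => ∫ s in a..t, β s) (Icc a b) := by
  rw [← uIcc_of_le hab] at hβ ⊢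
  exact continuousOn_primitive_interval (hβ.integrableOn_compact isCompact_uIcc)

theorem ContinuousOn.hasDerivAt_primitive_of_mem_Ioo (hβ : ContinuousOn β (Icc a b))
    {t : ℝ} (ht : t ∈ Ioo a b) : HasDerivAt (fun u => ∫ s in a..u, β s) (β t) t := by
  have hβt : ContinuousAt β t := hβ.continuousAt (Icc_mem_nhds ht.1 ht.2)
  refine integral_hasDerivAt_right ?_ ?_ hβt
  · refine (hβ.mono ?_).intervalIntegrable
    rw [uIcc_of_le ht.1.le]
    exact Icc_subset_Icc_right ht.2.le
  · exact (hβ.mono Ioo_subset_Icc_self).stronglyMeasurableAtFilter isOpen_Ioo t ht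

end Primitive

theorem le_mul_exp_integral_of_hasDerivAt_le_mul {β y y' : ℝ → ℝ} {a b : ℝ}
    (hβ : ContinuousOn β (Icc a b)) (hpos : ∀ t ∈ Icc a b, 0 < y t)
    (hy : ContinuousOn y (Icc a b)) (hy' : ∀ t ∈ Ioo a b, HasDerivAt y (y' t) t)
    (hle : ∀ t ∈ Ioo a b, y' t ≤ β t * y t) :
    ∀ t ∈ Icc a b, y t ≤ y a * exp (∫ s in a..t, β s) := by
  intro t ht
  have hab : a ≤ b := ht.1.trans ht.2
  set G : ℝ → ℝ := fun u => log (y u) - ∫ s in a..u, β s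
  have hG' : ∀ u ∈ Ioo a b, HasDerivAt G (y' u / y u - β u) u := fun u hu =>
    ((hy' u hu).log (hpos u (Ioo_subset_Icc_self hu)).ne').sub
      (hβ.hasDerivAt_primitive_of_mem_Ioo hu)
  have hG'_nonpos : ∀ u ∈ Ioo a b, y' u / y u - β u ≤ 0 := fun u hu => by
    rw [sub_nonpos, div_le_iff₀ (hpos u (Ioo_subset_Icc_self hu))]
    exact hle u hu
  have hG_anti : AntitoneOn G (Icc a b) := by
    refine antitoneOn_of_hasDerivWithinAt_nonpos (convex_Icc a b) ?_
      (fun u hu => (hG' u (by rwa [interior_Icc] at hu)).hasDerivWithinAt)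
      (fun u hu => hG'_nonpos u (by rwa [interior_Icc] at hu))
    exact (hy.log fun u hu => (hpos u hu).ne').sub (hβ.continuousOn_primitive_Icc_of_le hab)
  have hlog : log (y t) ≤ log (y a) + ∫ s in a..t, β s := by
    have := hG_anti (left_mem_Icc.2 hab) ht ht.1
    simp only [G, integral_same, sub_zero] at this
    linarith
  calc y t = exp (log (y t)) := (exp_log (hpos t ht)).symm
    _ ≤ exp (log (y a) + ∫ s in a..t, β s) := exp_le_exp.2 hlog
    _ = y a * exp (∫ s in a..t, β s) := by rw [exp_add, exp_log (hpos a (left_mem_Icc.2 hab))]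

theorem stmt14_general (α g T : ℝ) (p : ℝ → ℝ) (hp : Continuous p)
    (y y' : ℝ → ℝ)
    (hpos : ∀ t ∈ Set.Icc (0 : ℝ) T, 0 < y t)
    (hy : ∀ t ∈ Set.Icc (0 : ℝ) T, HasDerivAt y (y' t) t)
    (hineq : ∀ t ∈ Set.Icc (0 : ℝ) T, y' t ≤ -2 * α * y t + 2 * g * y t ^ (1 + p t / 2)) :
    ∀ t ∈ Set.Icc (0 : ℝ) T,
      y t ≤ y 0 * Real.exp (-2 * α * t + 2 * g * ∫ s in (0 : ℝ)..t, y s ^ (p s / 2)) := by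
  have hy_cont : ContinuousOn y (Icc 0 T) := fun t ht => (hy t ht).continuousAt.continuousWithinAt
  have hf : ContinuousOn (fun s => y s ^ (p s / 2)) (Icc 0 T) :=
    hy_cont.rpow (hp.continuousOn.div_const 2) fun s hs => Or.inl (hpos s hs).ne'
  have hlin : ∀ t ∈ Ioo 0 T, y' t ≤ (-2 * α + 2 * g * y t ^ (p t / 2)) * y t := fun t ht => by
    have ht' := Ioo_subset_Icc_self ht
    calc y' t ≤ -2 * α * y t + 2 * g * y t ^ (1 + p t / 2) := hineq t ht'
      _ = _ := by rw [rpow_add (hpos t ht'), rpow_one]; ring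
  intro t ht
  have hf_int : IntervalIntegrable (fun s => y s ^ (p s / 2)) MeasureTheory.volume 0 t := by
    refine (hf.mono ?_).intervalIntegrable
    rw [uIcc_of_le ht.1]
    exact Icc_subset_Icc_right ht.2
  have hβ : ContinuousOn (fun s => -2 * α + 2 * g * y s ^ (p s / 2)) (Icc 0 T) :=
    continuousOn_const.add (continuousOn_const.mul hf)
  have key := le_mul_exp_integral_of_hasDerivAt_le_mul hβ hpos hy_cont
    (fun t ht => hy t (Ioo_subset_Icc_self ht)) hlin t ht
  rwa [integral_add intervalIntegrable_const (hf_int.const_mul _), integral_const_mul (2 * g),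
    integral_const, smul_eq_mul, sub_zero, mul_comm t] at key

/-- Nonlinear Grönwall estimate (3.4): if `y > 0` on `[0, T]` satisfies
`y' ≤ -2α·y + 2g·y^(1 + p(t)/2)`, then
`y(t) ≤ y(0)·exp(-2αt + 2g·∫_0^t y(s)^(p(s)/2) ds)` on `[0, T]`. -/
theorem stmt14 (α g T : ℝ) (hg : 0 < g) (hT : 0 < T) (p : ℝ → ℝ) (hp : Continuous p)
    (y y' : ℝ → ℝ)
    (hpos : ∀ t ∈ Set.Icc (0 : ℝ) T, 0 < y t)
    (hy : ∀ t ∈ Set.Icc (0 : ℝ) T, HasDerivAt y (y' t) t)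
    (hineq : ∀ t ∈ Set.Icc (0 : ℝ) T, y' t ≤ -2 * α * y t + 2 * g * y t ^ (1 + p t / 2)) :
    ∀ t ∈ Set.Icc (0 : ℝ) T,
      y t ≤ y 0 * Real.exp (-2 * α * t + 2 * g * ∫ s in (0 : ℝ)..t, y s ^ (p s / 2)) :=
  stmt14_general α g T p hp y y' hpos hy hineq
end

section
/- Let A, g, q > 0 be real numbers. Suppose y : ℝ → ℝ satisfies y(t) ≥ 0 for all t ≥ 0, y has at every t ≥ 0 a derivative y'(t) with y'(t) ≤ -2*A*y(t) + 2*g*(y(t))^(q+1), and g * (y(0))^q < A. Then for every t ≥ 0, y(t) ≤ y(0) * exp(-2*(A - g*(y(0))^q) * t). -/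
/-!
While `y ≤ C` with `g C^q < A`, the nonlinear term is dominated linearly:
`y' ≤ -2(A - g C^q) y`. At any level `C` slightly above `y 0` this makes `y'` strictly
negative, so `y` can never climb to `C`; letting `C ↓ y 0` gives `y ≤ y 0` for all time.
With `C = y 0` the linear inequality then holds for all `t ≥ 0`, and Grönwall's inequality
gives the exponential decay.
-/

open Set Filter Topology Real

lemma rpow_add_one_le_mul_rpow {q u C : ℝ} (hq : 0 ≤ q) (hu : 0 ≤ u) (huC : u ≤ C) :
    u ^ (q + 1) ≤ u * C ^ q := by
  rcases hu.eq_or_lt with rfl | hu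
  · rw [zero_rpow (by positivity), zero_mul]
  · rw [rpow_add_one hu.ne', mul_comm]
    exact mul_le_mul_of_nonneg_left (rpow_le_rpow hu.le huC hq) hu.le

lemma neg_two_mul_add_two_mul_rpow_le {A g q u C : ℝ} (hg : 0 ≤ g) (hq : 0 ≤ q) (hu : 0 ≤ u)
    (huC : u ≤ C) : -2 * A * u + 2 * g * u ^ (q + 1) ≤ -2 * (A - g * C ^ q) * u := by
  nlinarith [mul_le_mul_of_nonneg_left (rpow_add_one_le_mul_rpow hq hu huC) hg]

theorem le_of_eventually_deriv_neg_at_level {f f' : ℝ → ℝ} {a B : ℝ}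
    (hf : ∀ t ∈ Ici a, HasDerivAt f (f' t) t) (ha : f a ≤ B)
    (hlevel : ∀ᶠ C in 𝓝[>] B, ∀ t ∈ Ici a, f t = C → f' t < 0) :
    ∀ t ∈ Ici a, f t ≤ B := by
  intro t ht
  refine ge_of_tendsto (x := 𝓝[>] B) (tendsto_id.mono_left nhdsWithin_le_nhds) ?_
  filter_upwards [hlevel, self_mem_nhdsWithin] with C hC hBC
  refine image_le_of_deriv_right_lt_deriv_boundary (a := a) (f := f) (B := fun _ => C)
    (fun x hx => (hf x hx.1).continuousAt.continuousWithinAt)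
    (fun x hx => (hf x hx.1).hasDerivWithinAt) (ha.trans hBC.out.le)
    (fun _ => hasDerivAt_const _ C) (fun x hx => hC x hx.1) ⟨ht, le_rfl⟩

theorem le_mul_exp_of_deriv_le_mul {f f' : ℝ → ℝ} {a K : ℝ}
    (hf : ∀ t ∈ Ici a, HasDerivAt f (f' t) t) (bound : ∀ t ∈ Ici a, f' t ≤ K * f t) :
    ∀ t ∈ Ici a, f t ≤ f a * exp (K * (t - a)) := by
  intro t ht
  rw [← gronwallBound_ε0]
  refine le_gronwallBound_of_liminf_deriv_right_le
    (fun x hx => (hf x hx.1).continuousAt.continuousWithinAt)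
    (fun x hx _ hr => (hf x hx.1).hasDerivWithinAt.liminf_right_slope_le hr) le_rfl
    (fun x hx => by simpa using bound x hx.1) t ⟨ht, le_rfl⟩

theorem stmt15_general (A g q : ℝ) (hg : 0 < g) (hq : 0 < q)
    (y y' : ℝ → ℝ)
    (hpos : ∀ t : ℝ, 0 ≤ t → 0 ≤ y t)
    (hy : ∀ t : ℝ, 0 ≤ t → HasDerivAt y (y' t) t)
    (hineq : ∀ t : ℝ, 0 ≤ t → y' t ≤ -2 * A * y t + 2 * g * y t ^ (q + 1))
    (hinit : g * y 0 ^ q < A) :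
    ∀ t : ℝ, 0 ≤ t → y t ≤ y 0 * Real.exp (-2 * (A - g * y 0 ^ q) * t) := by
  have hsmall : ∀ᶠ C in 𝓝[>] y 0, g * C ^ q < A :=
    nhdsWithin_le_nhds <| ((continuousAt_rpow_const _ q (Or.inr hq.le)).const_mul g).eventually
      (gt_mem_nhds hinit)
  have hbounded : ∀ t ∈ Ici 0, y t ≤ y 0 := by
    refine le_of_eventually_deriv_neg_at_level hy le_rfl ?_
    filter_upwards [hsmall, self_mem_nhdsWithin] with C hCA hC t ht hyt
    have hC0 : 0 < C := (hpos 0 le_rfl).trans_lt hC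
    calc y' t ≤ -2 * A * C + 2 * g * C ^ (q + 1) := hyt ▸ hineq t ht
      _ ≤ -2 * (A - g * C ^ q) * C := neg_two_mul_add_two_mul_rpow_le hg.le hq.le hC0.le le_rfl
      _ < 0 := mul_neg_of_neg_of_pos (by linarith) hC0
  intro t ht
  simpa only [sub_zero] using le_mul_exp_of_deriv_le_mul hy
    (fun s hs => (hineq s hs).trans
      (neg_two_mul_add_two_mul_rpow_le hg.le hq.le (hpos s hs) (hbounded s hs))) t ht

/-- Smallness–decay claim of Subsection 2.3: if `y ≥ 0` satisfies
`y' ≤ -2A·y + 2g·y^(q+1)` for `t ≥ 0` and `g·y(0)^q < A`, then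
`y(t) ≤ y(0)·exp(-2(A - g·y(0)^q)·t)` for all `t ≥ 0`. -/
theorem stmt15 (A g q : ℝ) (hA : 0 < A) (hg : 0 < g) (hq : 0 < q)
    (y y' : ℝ → ℝ)
    (hpos : ∀ t : ℝ, 0 ≤ t → 0 ≤ y t)
    (hy : ∀ t : ℝ, 0 ≤ t → HasDerivAt y (y' t) t)
    (hineq : ∀ t : ℝ, 0 ≤ t → y' t ≤ -2 * A * y t + 2 * g * y t ^ (q + 1))
    (hinit : g * y 0 ^ q < A) :
    ∀ t : ℝ, 0 ≤ t → y t ≤ y 0 * Real.exp (-2 * (A - g * y 0 ^ q) * t) :=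
  stmt15_general A g q hg hq y y' hpos hy hineq hinit
end
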